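/- For c ∈ (0,1] and integer α ≥ 2, the quantum protocol with fidelity density f^{pf}(F) = 1/√(c(2F−2+c)) on [(2−c)/2, 1] is successful according to W_{α,1} whenever c is sufficiently small; in particular, for the average-based criterion (α = 2), γ_{W_{2,1}}(f^{pf}) = 2(1 − c/3 − 2/3) = 2(1/3 − c/3) > 0 for all c ∈ (0,1). -/

import Mathlib

/-!
Substituting `F = (2 - c)/2 + (c/2) t²` turns `f^pf(F) dF` into `dt` on `[0, 1]`: the phase-flip
fidelity is distributed as `1 - c/2 + (c/2) U²` with `U` uniform. Hence the quantum score is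
`α ∫₀¹ (1 - c/2 + (c/2) t²)^(α-1) dt ≥ α (1 - c/2)^(α-1) ≥ α (1 - (α-1) c/2)` by Bernoulli, which
beats the classical score `2α/(α+1)` as soon as `c < 2/(α+1)`. For `α = 2` the integral is
elementary.
-/

open MeasureTheory Set

/-- Phase-flip fidelity density. -/
noncomputable def fPf (c F : ℝ) : ℝ := 1 / Real.sqrt (c * (2 * F - 2 + c))

/-- Certification functional γ_{W_{α,1}} for the phase-flip protocol:
the W-weighted score of f^pf (supported on [(2−c)/2, 1]) minus that of the
optimal classical density 2F on [0,1]. -/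
noncomputable def gammaPf (α : ℕ) (c : ℝ) : ℝ :=
  (∫ F in ((2 - c) / 2)..1, (α : ℝ) * F ^ (α - 1) * fPf c F) -
    ∫ F in (0 : ℝ)..1, (α : ℝ) * F ^ (α - 1) * (2 * F)

lemma fPf_comp_mul_deriv {c t : ℝ} (hc : 0 < c) (ht : 0 < t) :
    fPf c ((2 - c) / 2 + c / 2 * t ^ 2) * (c * t) = 1 := by
  have h : c * (2 * ((2 - c) / 2 + c / 2 * t ^ 2) - 2 + c) = (c * t) ^ 2 := by ring
  rw [fPf, h, Real.sqrt_sq (by positivity), one_div, inv_mul_cancel₀ (by positivity)]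

theorem integral_mul_fPf {c : ℝ} (hc : 0 < c) (g : ℝ → ℝ) :
    ∫ F in ((2 - c) / 2)..1, g F * fPf c F =
      ∫ t in (0 : ℝ)..1, g ((2 - c) / 2 + c / 2 * t ^ 2) := by
  set φ : ℝ → ℝ := fun t => (2 - c) / 2 + c / 2 * t ^ 2
  have hφ (t : ℝ) : HasDerivAt φ (c * t) t :=
    (((hasDerivAt_pow 2 t).const_mul (c / 2)).const_add ((2 - c) / 2)).congr_deriv (by ring)
  have hsubst := intervalIntegral.integral_comp_mul_deriv_of_deriv_nonneg (a := 0) (b := 1)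
    (g := fun F => g F * fPf c F) (fun t _ => (hφ t).continuousAt.continuousWithinAt)
    (fun t _ => hφ t) (fun t ht => mul_nonneg hc.le (by simpa using ht.1.le))
  have hφ0 : φ 0 = (2 - c) / 2 := by simp [φ]
  have hφ1 : φ 1 = 1 := by simp only [φ]; ring
  rw [hφ0, hφ1] at hsubst
  rw [← hsubst]
  refine intervalIntegral.integral_congr_ae (Filter.Eventually.of_forall fun t ht => ?_)
  rw [uIoc_of_le zero_le_one] at ht
  simp only [Function.comp_apply, mul_assoc, fPf_comp_mul_deriv hc ht.1, mul_one, φ]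

theorem integral_classical_score (α : ℕ) :
    ∫ F in (0 : ℝ)..1, (α : ℝ) * F ^ (α - 1) * (2 * F) = 2 * α / (α + 1) := by
  cases α with
  | zero => simp
  | succ k =>
    have h (F : ℝ) :
        ((k + 1 : ℕ) : ℝ) * F ^ (k + 1 - 1) * (2 * F) = 2 * (k + 1) * F ^ (k + 1) := by
      push_cast
      ring
    simp_rw [h, intervalIntegral.integral_const_mul, integral_pow]
    push_cast
    field_simp
    ring

theorem gammaPf_eq {c : ℝ} (hc : 0 < c) (α : ℕ) :
    gammaPf α c = α * (∫ t in (0 : ℝ)..1, ((2 - c) / 2 + c / 2 * t ^ 2) ^ (α - 1)) -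
      2 * α / (α + 1) := by
  rw [gammaPf, integral_mul_fPf hc (fun F => (α : ℝ) * F ^ (α - 1)), integral_classical_score,
    intervalIntegral.integral_const_mul]

theorem pow_le_integral_add_mul_sq_pow {a b : ℝ} (ha : 0 ≤ a) (hb : 0 ≤ b) (n : ℕ) :
    a ^ n ≤ ∫ t in (0 : ℝ)..1, (a + b * t ^ 2) ^ n :=
  calc a ^ n = ∫ _ in (0 : ℝ)..1, a ^ n := by simp
    _ ≤ ∫ t in (0 : ℝ)..1, (a + b * t ^ 2) ^ n :=
      intervalIntegral.integral_mono_on zero_le_one intervalIntegrable_const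
        (by apply Continuous.intervalIntegrable; fun_prop)
        fun t _ => pow_le_pow_left₀ ha (le_add_of_nonneg_right (by positivity)) n

theorem two_div_lt_pow {α : ℕ} (hα : 2 ≤ α) {c : ℝ} (hc : c < 2 / (α + 1)) :
    2 / (α + 1) < ((2 - c) / 2) ^ (α - 1) := by
  obtain ⟨n, rfl⟩ := Nat.exists_eq_add_of_le' hα
  push_cast at hc ⊢
  rw [lt_div_iff₀ (by positivity)] at hc
  have hbernoulli : 1 + ((n + 1 : ℕ) : ℝ) * (-(c / 2)) ≤ (1 + -(c / 2)) ^ (n + 1) :=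
    one_add_mul_le_pow (by nlinarith) (n + 1)
  calc 2 / ((n : ℝ) + 2 + 1) < 1 + ((n + 1 : ℕ) : ℝ) * (-(c / 2)) := by
        push_cast
        rw [div_lt_iff₀ (by positivity)]
        nlinarith
    _ ≤ ((2 - c) / 2) ^ (n + 1) := by convert hbernoulli using 2; ring

theorem gammaPf_pos {α : ℕ} (hα : 2 ≤ α) {c : ℝ} (hc : 0 < c) (hcα : c < 2 / (α + 1)) :
    0 < gammaPf α c := by
  have hc2 : c ≤ 2 :=
    hcα.le.trans (div_le_self zero_le_two (le_add_of_nonneg_left (Nat.cast_nonneg α)))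
  have hlower := pow_le_integral_add_mul_sq_pow (a := (2 - c) / 2) (b := c / 2) (by linarith)
    (by positivity) (α - 1)
  rw [gammaPf_eq hc, sub_pos]
  calc 2 * (α : ℝ) / (α + 1) = α * (2 / (α + 1)) := by ring
    _ < α * ∫ t in (0 : ℝ)..1, ((2 - c) / 2 + c / 2 * t ^ 2) ^ (α - 1) :=
      mul_lt_mul_of_pos_left ((two_div_lt_pow hα hcα).trans_le hlower) (by positivity)

theorem gammaPf_two {c : ℝ} (hc : 0 < c) : gammaPf 2 c = 2 * (1 / 3 - c / 3) := by
  rw [gammaPf_eq hc]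
  norm_num [integral_pow]
  ring

/-- For every integer α ≥ 2 the phase-flip protocol is successful according to
W_{α,1} whenever c is sufficiently small; in particular for α = 2,
γ = 2(1/3 − c/3) > 0 for all c ∈ (0,1). -/
theorem phase_flip_certification :
    (∀ α : ℕ, 2 ≤ α → ∃ c₀ > (0 : ℝ), ∀ c : ℝ, 0 < c → c ≤ 1 → c < c₀ →
      0 < gammaPf α c) ∧
    (∀ c : ℝ, 0 < c → c < 1 →
      gammaPf 2 c = 2 * (1 / 3 - c / 3) ∧ 0 < gammaPf 2 c) := by
  refine ⟨fun α hα => ⟨2 / (α + 1), by positivity, fun c hc _ hcα => gammaPf_pos hα hc hcα⟩,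
    fun c hc hc1 => ?_⟩
  have hγ := gammaPf_two hc
  exact ⟨hγ, by rw [hγ]; linarith⟩
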